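/- arXiv:math/9903011 — 2 statements merged into one kernel-verified Lean document; each statement's English description precedes it below -/
import Mathlib

section
/- For any prime p and integer l ≥ 1, the smallest normal subgroup of SL_2(Z/p^l Z) containing the matrix [[1, p^{l-1}],[0,1]] is the kernel of the reduction map SL_2(Z/p^l Z) → SL_2(Z/p^{l-1} Z). -/
open Matrix Subgroup

private lemma upow_aux {R : Type*} [CommRing R] (t : R) (n : ℕ) :
    (!![1, t; 0, 1] : Matrix (Fin 2) (Fin 2) R) ^ n = !![1, (n : R) * t; 0, 1] := by
  induction n with
  | zero => simp [Matrix.one_fin_two]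
  | succ n ih => rw [pow_succ, ih, Matrix.mul_fin_two]; push_cast; ring_nf

private lemma lpow_aux {R : Type*} [CommRing R] (t : R) (n : ℕ) :
    (!![1, 0; t, 1] : Matrix (Fin 2) (Fin 2) R) ^ n = !![1, 0; (n : R) * t, 1] := by
  induction n with
  | zero => simp [Matrix.one_fin_two]
  | succ n ih => rw [pow_succ, ih, Matrix.mul_fin_two]; push_cast; ring_nf

private lemma gpow_aux {R : Type*} [CommRing R] (t : R) (n : ℕ) :
    (!![1 + t, -t; t, 1 - t] : Matrix (Fin 2) (Fin 2) R) ^ n =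
      !![1 + (n : R) * t, -((n : R) * t); (n : R) * t, 1 - (n : R) * t] := by
  induction n with
  | zero => simp [Matrix.one_fin_two]
  | succ n ih =>
    rw [pow_succ, ih, Matrix.mul_fin_two]; push_cast; congr 1; ring_nf

private lemma key_prod {R : Type*} [CommRing R] (s a b c : R) (hs : s * s = 0) :
    !![1 + s * a, s * b; s * c, 1 - s * a] =
      !![1 + (-a) * (-s), -((-a) * (-s)); (-a) * (-s), 1 - (-a) * (-s)] *
        !![1, (b + a) * s; 0, 1] * !![1, 0; (a - c) * (-s), 1] := by
  have hs2 : s ^ 2 = 0 := by rw [sq]; exact hs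
  have hs3 : s ^ 3 = 0 := by rw [pow_succ, hs2, zero_mul]
  rw [Matrix.mul_fin_two, Matrix.mul_fin_two]
  ext i j
  fin_cases i <;> fin_cases j <;> simp <;> ring_nf <;> simp [hs2, hs3]

private lemma cast_val_self {n : ℕ} [NeZero n] (x : ZMod n) : ((x.val : ℕ) : ZMod n) = x := by
  simp [ZMod.natCast_val, ZMod.cast_id]

private lemma mem_div {n m : ℕ} (h : m ∣ n) [NeZero n] (x : ZMod n)
    (hx : ZMod.castHom h (ZMod m) x = 0) : ∃ a : ℕ, x = (m : ZMod n) * a := by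
  rw [ZMod.castHom_apply, ← ZMod.natCast_val, ZMod.natCast_eq_zero_iff] at hx
  obtain ⟨a, ha⟩ := hx
  refine ⟨a, ?_⟩
  have := congrArg (fun t : ℕ => (t : ZMod n)) ha
  simpa [ZMod.natCast_val, ZMod.cast_id] using this

theorem normalClosure_eq_ker_reduction (p l : ℕ) (hp : p.Prime) (hl : 1 ≤ l)
    (A : Matrix.SpecialLinearGroup (Fin 2) (ZMod (p ^ l)))
    (hA : (A : Matrix (Fin 2) (Fin 2) (ZMod (p ^ l))) = !![1, (p ^ (l - 1) : ZMod (p ^ l)); 0, 1]) :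
    Subgroup.normalClosure {A} =
      (Matrix.SpecialLinearGroup.map
        (ZMod.castHom (pow_dvd_pow p (Nat.sub_le l 1)) (ZMod (p ^ (l - 1))))).ker := by
  haveI : Fact p.Prime := ⟨hp⟩
  haveI : NeZero (p ^ l) := ⟨pow_ne_zero _ hp.pos.ne'⟩
  set R := ZMod (p ^ l) with hR
  set N := Subgroup.normalClosure {A} with hN
  set f := ZMod.castHom (pow_dvd_pow p (Nat.sub_le l 1)) (ZMod (p ^ (l - 1))) with hf
  set s : R := (p : R) ^ (l - 1) with hsdef
  -- A is in the kernel
  have hscast : ((p ^ (l - 1) : ℕ) : R) = s := by push_cast; rfl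
  have hfs : f s = 0 := by
    rw [hsdef, map_pow, map_natCast, ← Nat.cast_pow, ZMod.natCast_self]
  have hAmem : A ∈ (Matrix.SpecialLinearGroup.map f).ker := by
    rw [MonoidHom.mem_ker]
    apply Matrix.SpecialLinearGroup.ext
    intro i j
    rw [show ((Matrix.SpecialLinearGroup.map f A : Matrix.SpecialLinearGroup (Fin 2) _) :
        Matrix (Fin 2) (Fin 2) _) = f.mapMatrix ↑A from
      Matrix.SpecialLinearGroup.map_apply_coe f A, RingHom.mapMatrix_apply, hA]
    fin_cases i <;> fin_cases j <;>
      simp [Matrix.map_apply, Matrix.one_fin_two, hfs]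
  refine le_antisymm (Subgroup.normalClosure_le_normal (Set.singleton_subset_iff.mpr hAmem)) ?_
  have hAN : A ∈ N := Subgroup.subset_normalClosure (Set.mem_singleton A)
  intro M hM
  rcases eq_or_lt_of_le hl with hl1 | hl2
  · -- case l = 1 : generation of SL₂ over the field ZMod p
    have hs1 : s = 1 := by
      have h0 : l - 1 = 0 := by omega
      rw [hsdef, h0, pow_zero]
    haveI : Fact (p ^ l).Prime := ⟨by rwa [← hl1, pow_one]⟩
    rw [hs1] at hA
    have hU : ∀ (x : R) (B : Matrix.SpecialLinearGroup (Fin 2) R),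
        (B : Matrix (Fin 2) (Fin 2) R) = !![1, x; 0, 1] → B ∈ N := by
      intro x B hB
      have hBA : B = A ^ x.val := by
        apply Subtype.coe_injective
        show (B : Matrix (Fin 2) (Fin 2) R) = ((A ^ x.val :
          Matrix.SpecialLinearGroup (Fin 2) R) : Matrix (Fin 2) (Fin 2) R)
        rw [hB, Matrix.SpecialLinearGroup.coe_pow, hA, upow_aux, cast_val_self, mul_one]
      rw [hBA]
      exact pow_mem hAN _
    set w : Matrix.SpecialLinearGroup (Fin 2) R :=
      ⟨!![0, -1; 1, 0], by simp [Matrix.det_fin_two_of]⟩ with hwdef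
    have hL : ∀ (x : R) (B : Matrix.SpecialLinearGroup (Fin 2) R),
        (B : Matrix (Fin 2) (Fin 2) R) = !![1, 0; x, 1] → B ∈ N := by
      intro x B hB
      let Ux : Matrix.SpecialLinearGroup (Fin 2) R :=
        ⟨!![1, -x; 0, 1], by simp [Matrix.det_fin_two_of]⟩
      have hUx : Ux ∈ N := hU (-x) _ rfl
      have hBe : B = w * Ux * w⁻¹ := by
        apply Subtype.coe_injective
        show (B : Matrix (Fin 2) (Fin 2) R) =
          ((w * Ux * w⁻¹ :
            Matrix.SpecialLinearGroup (Fin 2) R) : Matrix (Fin 2) (Fin 2) R)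
        rw [hB, Matrix.SpecialLinearGroup.coe_mul, Matrix.SpecialLinearGroup.coe_mul,
          Matrix.SpecialLinearGroup.coe_inv]
        show _ = !![0, -1; 1, 0] * !![1, -x; 0, 1] * Matrix.adjugate !![0, -1; 1, 0]
        rw [Matrix.adjugate_fin_two_of, Matrix.mul_fin_two, Matrix.mul_fin_two]
        ext i j
        fin_cases i <;> fin_cases j <;> simp <;> ring
      rw [hBe]
      exact Subgroup.Normal.conj_mem Subgroup.normalClosure_normal _ hUx w
    have hcmain : ∀ B : Matrix.SpecialLinearGroup (Fin 2) R,
        (B : Matrix (Fin 2) (Fin 2) R) 1 0 ≠ 0 → B ∈ N := by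
      intro B hc0
      have hdet : ((B : Matrix (Fin 2) (Fin 2) R)).det = 1 := B.property
      rw [Matrix.det_fin_two] at hdet
      set a := (B : Matrix (Fin 2) (Fin 2) R) 0 0 with hax
      set b := (B : Matrix (Fin 2) (Fin 2) R) 0 1 with hbx
      set c := (B : Matrix (Fin 2) (Fin 2) R) 1 0 with hcx
      set d := (B : Matrix (Fin 2) (Fin 2) R) 1 1 with hdx
      let U1 : Matrix.SpecialLinearGroup (Fin 2) R :=
        ⟨!![1, (a - 1) * c⁻¹; 0, 1], by simp [Matrix.det_fin_two_of]⟩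
      let L0 : Matrix.SpecialLinearGroup (Fin 2) R :=
        ⟨!![1, 0; c, 1], by simp [Matrix.det_fin_two_of]⟩
      let U2 : Matrix.SpecialLinearGroup (Fin 2) R :=
        ⟨!![1, (d - 1) * c⁻¹; 0, 1], by simp [Matrix.det_fin_two_of]⟩
      have hBe : B = U1 * L0 * U2 := by
        apply Subtype.coe_injective
        show (B : Matrix (Fin 2) (Fin 2) R) = !![1, (a - 1) * c⁻¹; 0, 1] *
          !![1, 0; c, 1] * !![1, (d - 1) * c⁻¹; 0, 1]
        rw [Matrix.mul_fin_two, Matrix.mul_fin_two]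
        have hinv : c * c⁻¹ = 1 := ZMod.mul_inv_of_unit c (Ne.isUnit hc0)
        ext i j
        fin_cases i <;> fin_cases j <;>
          simp only [Matrix.cons_val', Matrix.cons_val_zero, Matrix.cons_val_one,
            Matrix.head_cons, Matrix.head_fin_const, Matrix.empty_val',
            Matrix.cons_val_fin_one, Matrix.of_apply, Fin.mk_one, Fin.zero_eta, Fin.isValue] <;>
          simp only [← hax, ← hbx, ← hcx, ← hdx]
        · linear_combination (-(a - 1)) * hinv
        · linear_combination (-b - (a - 1) * (d - 1) * c⁻¹) * hinv - c⁻¹ * hdet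
        · ring
        · linear_combination (-(d - 1)) * hinv
      rw [hBe]
      exact mul_mem (mul_mem (hU _ _ rfl) (hL _ _ rfl)) (hU _ _ rfl)
    by_cases h10 : (M : Matrix (Fin 2) (Fin 2) R) 1 0 = 0
    · have hdet : ((M : Matrix (Fin 2) (Fin 2) R)).det = 1 := M.property
      rw [Matrix.det_fin_two, h10] at hdet
      set L1 : Matrix.SpecialLinearGroup (Fin 2) R :=
        ⟨!![1, 0; 1, 1], by simp [Matrix.det_fin_two_of]⟩ with hL1def
      have h2 : ((L1 * M : Matrix.SpecialLinearGroup (Fin 2) R) :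
          Matrix (Fin 2) (Fin 2) R) 1 0 ≠ 0 := by
        have hco : ((L1 * M : Matrix.SpecialLinearGroup (Fin 2) R) :
            Matrix (Fin 2) (Fin 2) R) 1 0 = (M : Matrix (Fin 2) (Fin 2) R) 0 0 := by
          rw [Matrix.SpecialLinearGroup.coe_mul, Matrix.mul_apply, Fin.sum_univ_two]
          simp [hL1def, h10]
        rw [hco]
        intro h0
        rw [h0] at hdet
        simp at hdet
      have hMe : M = L1⁻¹ * (L1 * M) := by group
      rw [hMe]
      exact mul_mem (inv_mem (hL 1 L1 rfl)) (hcmain _ h2)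
    · exact hcmain M h10
  · -- case l ≥ 2
    have hss : s * s = 0 := by
      rw [hsdef, ← pow_add, ← Nat.cast_pow, ZMod.natCast_eq_zero_iff]
      exact pow_dvd_pow p (by omega)
    -- extract entry congruences
    rw [MonoidHom.mem_ker] at hM
    have hM' : (f.mapMatrix : Matrix (Fin 2) (Fin 2) R →+* _) ↑M = 1 := by
      rw [← Matrix.SpecialLinearGroup.map_apply_coe, hM,
        Matrix.SpecialLinearGroup.coe_one]
    have hent : ∀ i j, f ((M : Matrix (Fin 2) (Fin 2) R) i j) = (1 : Matrix (Fin 2) (Fin 2) (ZMod (p ^ (l - 1)))) i j := by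
      intro i j
      rw [← hM', RingHom.mapMatrix_apply, Matrix.map_apply]
    have hdvd : ∀ x : R, f x = 0 → ∃ a : ℕ, x = s * a := by
      intro x hx
      obtain ⟨a, ha⟩ := mem_div (pow_dvd_pow p (Nat.sub_le l 1)) x hx
      exact ⟨a, by rwa [hscast] at ha⟩
    obtain ⟨a, ha⟩ := hdvd ((M : Matrix (Fin 2) (Fin 2) R) 0 0 - 1) (by
      rw [map_sub, hent 0 0]; simp [Matrix.one_fin_two])
    obtain ⟨b, hb⟩ := hdvd ((M : Matrix (Fin 2) (Fin 2) R) 0 1) (by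
      rw [hent 0 1]; simp [Matrix.one_fin_two])
    obtain ⟨c, hc⟩ := hdvd ((M : Matrix (Fin 2) (Fin 2) R) 1 0) (by
      rw [hent 1 0]; simp [Matrix.one_fin_two])
    obtain ⟨d, hd⟩ := hdvd ((M : Matrix (Fin 2) (Fin 2) R) 1 1 - 1) (by
      rw [map_sub, hent 1 1]; simp [Matrix.one_fin_two])
    rw [sub_eq_iff_eq_add] at ha hd
    have hdet : ((M : Matrix (Fin 2) (Fin 2) R)).det = 1 := M.property
    rw [Matrix.det_fin_two, ha, hb, hc, hd] at hdet
    have hd' : (M : Matrix (Fin 2) (Fin 2) R) 1 1 = 1 - s * a := by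
      rw [hd]; linear_combination hdet + ((b : R) * c - (a : R) * d) * hss
    -- the three generators
    set w : Matrix.SpecialLinearGroup (Fin 2) R :=
      ⟨!![0, -1; 1, 0], by simp [Matrix.det_fin_two_of]⟩ with hw
    set V : Matrix.SpecialLinearGroup (Fin 2) R :=
      ⟨!![1, 0; 1, 1], by simp [Matrix.det_fin_two_of]⟩ with hV
    have hG2co : ((w * A * w⁻¹ : Matrix.SpecialLinearGroup (Fin 2) R) :
        Matrix (Fin 2) (Fin 2) R) = !![1, 0; -s, 1] := by
      rw [Matrix.SpecialLinearGroup.coe_mul, Matrix.SpecialLinearGroup.coe_mul,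
        Matrix.SpecialLinearGroup.coe_inv, hA]
      show !![0, -1; 1, 0] * _ * Matrix.adjugate !![0, -1; 1, 0] = _
      rw [Matrix.adjugate_fin_two_of, Matrix.mul_fin_two, Matrix.mul_fin_two]
      norm_num
      ring
    have hG3co : ((V * A * V⁻¹ : Matrix.SpecialLinearGroup (Fin 2) R) :
        Matrix (Fin 2) (Fin 2) R) = !![1 + -s, -(-s); -s, 1 - -s] := by
      rw [Matrix.SpecialLinearGroup.coe_mul, Matrix.SpecialLinearGroup.coe_mul,
        Matrix.SpecialLinearGroup.coe_inv, hA]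
      show !![1, 0; 1, 1] * _ * Matrix.adjugate !![1, 0; 1, 1] = _
      rw [Matrix.adjugate_fin_two_of, Matrix.mul_fin_two, Matrix.mul_fin_two]
      ext i j
      fin_cases i <;> fin_cases j <;> simp <;> ring
    set n3 := (-(a : R)).val with hn3d
    set n1 := ((b : R) + (a : R)).val with hn1d
    set n2 := ((a : R) - (c : R)).val with hn2d
    have hn3 : ((n3 : ℕ) : R) = -(a : R) := cast_val_self _
    have hn1 : ((n1 : ℕ) : R) = (b : R) + (a : R) := cast_val_self _
    have hn2 : ((n2 : ℕ) : R) = (a : R) - (c : R) := cast_val_self _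
    have hMeq : M = (V * A * V⁻¹) ^ n3 * A ^ n1 * (w * A * w⁻¹) ^ n2 := by
      apply Subtype.coe_injective
      show (M : Matrix (Fin 2) (Fin 2) R) =
        (((V * A * V⁻¹) ^ n3 * A ^ n1 * (w * A * w⁻¹) ^ n2 :
          Matrix.SpecialLinearGroup (Fin 2) R) : Matrix (Fin 2) (Fin 2) R)
      rw [Matrix.SpecialLinearGroup.coe_mul, Matrix.SpecialLinearGroup.coe_mul,
        Matrix.SpecialLinearGroup.coe_pow, Matrix.SpecialLinearGroup.coe_pow,
        Matrix.SpecialLinearGroup.coe_pow, hG3co, hG2co, hA,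
        gpow_aux, upow_aux, lpow_aux, hn3, hn1, hn2]
      have hMco : (M : Matrix (Fin 2) (Fin 2) R) =
          !![1 + s * a, s * b; s * c, 1 - s * a] := by
        ext i j
        fin_cases i <;> fin_cases j <;> simp [ha, hb, hc, hd'] <;> ring
      rw [hMco, key_prod s a b c hss]
    rw [hMeq]
    have hNn : N.Normal := Subgroup.normalClosure_normal
    exact mul_mem (mul_mem (pow_mem (hNn.conj_mem A hAN V) n3) (pow_mem hAN n1))
      (pow_mem (hNn.conj_mem A hAN w) n2)

example : True := trivial
end

section
/- Let f: H × H → C be a holomorphic function invariant under the weight-(k1,k2) action of the group Γ_{≃,ε}(N), and suppose f is also invariant under the pair of matrices ((1, N/d; 0, 1), (1, 0; 0, 1)) for some divisor d of N. Then f is invariant under all of Γ_{≃,ε}(N/d). -/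
open UpperHalfPlane Manifold

/-- The congruence conditions defining `Γ_{≃,ε}(N)` for `e = ε` in `ZMod N`. -/
def GammaIsoCond (N : ℕ) (e : ZMod N)
    (γ : Matrix.SpecialLinearGroup (Fin 2) ℤ × Matrix.SpecialLinearGroup (Fin 2) ℤ) : Prop :=
  ((γ.1 0 0 : ℤ) : ZMod N) = ((γ.2 0 0 : ℤ) : ZMod N) ∧
  ((γ.1 0 1 : ℤ) : ZMod N) = e * ((γ.2 0 1 : ℤ) : ZMod N) ∧
  e * ((γ.1 1 0 : ℤ) : ZMod N) = ((γ.2 1 0 : ℤ) : ZMod N) ∧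
  ((γ.1 1 1 : ℤ) : ZMod N) = ((γ.2 1 1 : ℤ) : ZMod N)

/-- Invariance of `f : ℍ × ℍ → ℂ` under the weight-`(k₁,k₂)` slash action of a pair of
matrices in `SL₂(ℤ)` (for which the automorphy factor is `(c z + d)^k`). -/
def SlashInvariantPair (k₁ k₂ : ℤ) (f : UpperHalfPlane → UpperHalfPlane → ℂ)
    (γ : Matrix.SpecialLinearGroup (Fin 2) ℤ × Matrix.SpecialLinearGroup (Fin 2) ℤ) : Prop :=
  ∀ z₁ z₂ : UpperHalfPlane,
    f (γ.1 • z₁) (γ.2 • z₂) =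
      (((γ.1 1 0 : ℤ) : ℂ) * z₁ + ((γ.1 1 1 : ℤ) : ℂ)) ^ k₁ *
        (((γ.2 1 0 : ℤ) : ℂ) * z₂ + ((γ.2 1 1 : ℤ) : ℂ)) ^ k₂ * f z₁ z₂

namespace AuxDescend
open Matrix

lemma SL2_ext' {R : Type*} [CommRing R] {x y : SpecialLinearGroup (Fin 2) R}
    (h00 : x 0 0 = y 0 0) (h01 : x 0 1 = y 0 1) (h10 : x 1 0 = y 1 0) (h11 : x 1 1 = y 1 1) :
    x = y := by
  apply Matrix.SpecialLinearGroup.ext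
  intro i j
  fin_cases i <;> fin_cases j
  · exact h00
  · exact h01
  · exact h10
  · exact h11


variable {R : Type*} [CommRing R] {S : Type*} [CommRing S]

def e12 (x : R) : SpecialLinearGroup (Fin 2) R :=
  ⟨!![1, x; 0, 1], by simp [Matrix.det_fin_two_of]⟩
def e21 (x : R) : SpecialLinearGroup (Fin 2) R :=
  ⟨!![1, 0; x, 1], by simp [Matrix.det_fin_two_of]⟩
def wS : SpecialLinearGroup (Fin 2) R :=
  ⟨!![0, -1; 1, 0], by simp [Matrix.det_fin_two_of]⟩

@[simp] lemma coe_e12 (x : R) : ((e12 x) : Matrix (Fin 2) (Fin 2) R) = !![1, x; 0, 1] := rfl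
@[simp] lemma coe_e21 (x : R) : ((e21 x) : Matrix (Fin 2) (Fin 2) R) = !![1, 0; x, 1] := rfl
@[simp] lemma coe_wS : ((wS : SpecialLinearGroup (Fin 2) R) : Matrix (Fin 2) (Fin 2) R) = !![0, -1; 1, 0] := rfl

lemma e12_mul (x y : R) : e12 x * e12 y = e12 (x + y) := by
  apply Subtype.ext
  rw [Matrix.SpecialLinearGroup.coe_mul, coe_e12, coe_e12, coe_e12, Matrix.mul_fin_two]
  norm_num [add_comm]

lemma e21_mul (x y : R) : e21 x * e21 y = e21 (x + y) := by
  apply Subtype.ext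
  rw [Matrix.SpecialLinearGroup.coe_mul, coe_e21, coe_e21, coe_e21, Matrix.mul_fin_two]
  norm_num [add_comm]

lemma e12_zero : (e12 (0 : R)) = 1 := by
  apply Subtype.ext
  rw [coe_e12, Matrix.SpecialLinearGroup.coe_one, Matrix.one_fin_two]

lemma e21_zero : (e21 (0 : R)) = 1 := by
  apply Subtype.ext
  rw [coe_e21, Matrix.SpecialLinearGroup.coe_one, Matrix.one_fin_two]

lemma e12_inv (x : R) : (e12 x)⁻¹ = e12 (-x) :=
  inv_eq_of_mul_eq_one_right (by rw [e12_mul, add_neg_cancel, e12_zero])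

lemma e21_inv (x : R) : (e21 x)⁻¹ = e21 (-x) :=
  inv_eq_of_mul_eq_one_right (by rw [e21_mul, add_neg_cancel, e21_zero])

lemma map_e12 (f : R →+* S) (x : R) :
    Matrix.SpecialLinearGroup.map f (e12 x) = e12 (f x) := by
  apply Subtype.ext
  show (f.mapMatrix (!![1, x; 0, 1]) : Matrix (Fin 2) (Fin 2) S) = !![1, f x; 0, 1]
  ext i j
  fin_cases i <;> fin_cases j <;> simp

lemma map_e21 (f : R →+* S) (x : R) :
    Matrix.SpecialLinearGroup.map f (e21 x) = e21 (f x) := by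
  apply Subtype.ext
  show (f.mapMatrix (!![1, 0; x, 1]) : Matrix (Fin 2) (Fin 2) S) = !![1, 0; f x, 1]
  ext i j
  fin_cases i <;> fin_cases j <;> simp

lemma e21_eq_conj (x : R) : e21 x = wS * e12 (-x) * wS⁻¹ := by
  rw [eq_mul_inv_iff_mul_eq]
  apply Subtype.ext
  rw [Matrix.SpecialLinearGroup.coe_mul, Matrix.SpecialLinearGroup.coe_mul, coe_e21, coe_e12,
    coe_wS, Matrix.mul_fin_two, Matrix.mul_fin_two]
  norm_num



lemma exists_coprime_progression (x y : ℤ) (m : ℕ) (hm : m ≠ 0)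
    (h : ∀ p : ℕ, p.Prime → (p : ℤ) ∣ x → (p : ℤ) ∣ y → ¬(p ∣ m)) :
    ∃ t : ℤ, Int.gcd (x + t * y) m = 1 := by
  classical
  set S := m.primeFactors.filter (fun p : ℕ => ¬((p : ℤ) ∣ x)) with hS
  set P : ℕ := S.prod (fun p => p) with hP
  refine ⟨(P : ℤ), ?_⟩
  by_contra hg
  obtain ⟨q, hq, hqd⟩ := Nat.exists_prime_and_dvd hg
  have hq1 : (q : ℤ) ∣ (x + (P : ℤ) * y) := by
    exact dvd_trans (Int.natCast_dvd_natCast.2 hqd) (Int.gcd_dvd_left _ _)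
  have hqm : q ∣ m := by
    exact_mod_cast dvd_trans (Int.natCast_dvd_natCast.2 hqd) (Int.gcd_dvd_right (a := x + (P : ℤ) * y) (b := (m : ℤ)))
  by_cases hx : (q : ℤ) ∣ x
  · have hqP : ¬ q ∣ S.prod id := by
      intro hdvd
      obtain ⟨p, hp, hqp⟩ := (hq.prime.dvd_finset_prod_iff id).1 hdvd
      have hpS := hp
      rw [hS, Finset.mem_filter] at hpS
      have hpprime : p.Prime := Nat.prime_of_mem_primeFactors hpS.1
      have : q = p := (Nat.prime_dvd_prime_iff_eq hq hpprime).1 hqp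
      exact hpS.2 (this ▸ hx)
    have hty : (q : ℤ) ∣ (P : ℤ) * y := by
      have : (q : ℤ) ∣ (x + (P : ℤ) * y) - x := dvd_sub hq1 hx
      simpa using this
    rcases ((Nat.prime_iff_prime_int.1 hq).dvd_mul).1 hty with hP | hy
    · exact hqP (Int.natCast_dvd_natCast.1 hP)
    · exact h q hq hx hy hqm
  · have hqS : q ∈ S := by
      rw [hS, Finset.mem_filter]
      exact ⟨Nat.mem_primeFactors.2 ⟨hq, hqm, hm⟩, hx⟩
    have : (q : ℤ) ∣ (P : ℤ) := Int.natCast_dvd_natCast.2 (Finset.dvd_prod_of_mem (fun p => p) hqS)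
    exact hx (by simpa using dvd_sub hq1 (Dvd.dvd.mul_right this y))

def red (n : ℕ) : SpecialLinearGroup (Fin 2) ℤ →* SpecialLinearGroup (Fin 2) (ZMod n) :=
  Matrix.SpecialLinearGroup.map (Int.castRingHom (ZMod n))

lemma red_apply (n : ℕ) (g : SpecialLinearGroup (Fin 2) ℤ) (i j : Fin 2) :
    (red n g) i j = ((g i j : ℤ) : ZMod n) := rfl

lemma red_surjective (n : ℕ) (hn : 0 < n) : Function.Surjective (red n) := by
  haveI : NeZero n := ⟨hn.ne'⟩
  intro x
  set a : ℤ := ((x 0 0).val : ℤ) with ha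
  set b : ℤ := ((x 0 1).val : ℤ) with hb
  set c : ℤ := ((x 1 0).val : ℤ) with hc
  set d : ℤ := ((x 1 1).val : ℤ) with hd
  have hcast : ∀ i j, ((((x i j).val : ℤ) : ZMod n)) = x i j := by
    intro i j
    exact_mod_cast ZMod.natCast_rightInverse (x i j)
  have hdet : ((a * d - b * c - 1 : ℤ) : ZMod n) = 0 := by
    have hx2 : x 0 0 * x 1 1 - x 0 1 * x 1 0 = 1 := by
      have := x.2
      rwa [Matrix.det_fin_two] at this
    push_cast
    rw [hcast 0 0, hcast 1 1, hcast 0 1, hcast 1 0]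
    rw [sub_eq_zero]
    exact_mod_cast hx2
  have hdvd : (n : ℤ) ∣ (a * d - b * c - 1) := (ZMod.intCast_zmod_eq_zero_iff_dvd _ n).1 hdet
  set s : ℤ := if c = 0 then 1 else 0 with hs
  set c' : ℤ := c + s * n with hc'
  have hc'0 : c' ≠ 0 := by
    rcases eq_or_ne c 0 with h0 | h0
    · rw [hc', hs, if_pos h0, h0]
      simpa using (by exact_mod_cast hn.ne' : (n : ℤ) ≠ 0)
    · rw [hc', hs, if_neg h0]
      simpa using h0
  have hprog : ∃ t : ℤ, Int.gcd (d + t * n) c'.natAbs = 1 := by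
    apply exists_coprime_progression d (n : ℤ) c'.natAbs (Int.natAbs_ne_zero.2 hc'0)
    intro p hp hpd hpn hpc'
    have hpc : (p : ℤ) ∣ c := by
      have h1 : (p : ℤ) ∣ c' := by
        rw [← Int.natAbs_dvd_natAbs]
        simpa using hpc'
      have : (p : ℤ) ∣ s * n := Dvd.dvd.mul_left hpn s
      simpa [hc'] using dvd_sub h1 this
    have hp1 : (p : ℤ) ∣ 1 := by
      have h2 : (p : ℤ) ∣ a * d - b * c := dvd_sub (Dvd.dvd.mul_left hpd a) (Dvd.dvd.mul_left hpc b)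
      have h3 : (p : ℤ) ∣ a * d - b * c - 1 := dvd_trans hpn hdvd
      simpa using dvd_sub h2 h3
    have : p ∣ 1 := by exact_mod_cast hp1
    exact hp.one_lt.ne' (Nat.dvd_one.1 this)
  obtain ⟨t, ht⟩ := hprog
  set d' : ℤ := d + t * n with hd'
  have hcop : IsCoprime c' d' := by
    rw [Int.isCoprime_iff_gcd_eq_one, Int.gcd_comm]
    rw [Int.gcd] at ht ⊢
    simp only [Int.natAbs_natCast] at ht
    exact ht
  obtain ⟨u, v, huv⟩ := hcop
  have hdvd2 : (n : ℤ) ∣ (a * d' - b * c' - 1) := by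
    have : a * d' - b * c' - 1 = (a * d - b * c - 1) + n * (a * t - b * s) := by
      rw [hd', hc']; ring
    rw [this]
    exact dvd_add hdvd ⟨a * t - b * s, rfl⟩
  obtain ⟨k, hk⟩ := hdvd2
  set a' : ℤ := a - n * k * v with ha'
  set b' : ℤ := b + n * k * u with hb'
  have hdet1 : a' * d' - b' * c' = 1 := by
    have : a' * d' - b' * c' = (a * d' - b * c' - 1) - n * k * (u * c' + v * d') + 1 := by
      rw [ha', hb']; ring
    rw [this, hk, huv]; ring
  refine ⟨⟨!![a', b'; c', d'], by rw [Matrix.det_fin_two_of]; exact hdet1⟩, ?_⟩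
  apply Subtype.ext
  show ((Int.castRingHom (ZMod n)).mapMatrix (!![a', b'; c', d'] : Matrix (Fin 2) (Fin 2) ℤ)) = (x : Matrix (Fin 2) (Fin 2) (ZMod n))
  rw [Matrix.eta_fin_two (x : Matrix (Fin 2) (Fin 2) (ZMod n))]
  have hn0 : ((n : ℤ) : ZMod n) = 0 := by exact_mod_cast ZMod.natCast_self n
  ext i j
  fin_cases i <;> fin_cases j <;>
    simp [ha', hb', hc', hd', RingHom.mapMatrix_apply] <;>
    push_cast [hn0] <;>
    rw [← hcast] <;> push_cast [hn0] <;> ring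

lemma det_rel (y : SpecialLinearGroup (Fin 2) R) :
    y 0 0 * y 1 1 - y 0 1 * y 1 0 = 1 := by
  have := y.2
  rwa [Matrix.det_fin_two] at this

variable {F : Type*} [Field F]

lemma elem_decomp_aux (y : SpecialLinearGroup (Fin 2) F) (hc : y 1 0 ≠ 0) :
    ∃ B C D : F, y = e12 B * e21 C * e12 D := by
  refine ⟨(y 0 0 - 1) / y 1 0, y 1 0, (y 1 1 - 1) / y 1 0, ?_⟩
  have hdet := det_rel y
  apply Subtype.ext
  rw [Matrix.SpecialLinearGroup.coe_mul, Matrix.SpecialLinearGroup.coe_mul, coe_e12, coe_e21,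
    coe_e12, Matrix.mul_fin_two, Matrix.mul_fin_two]
  rw [Matrix.eta_fin_two (y : Matrix (Fin 2) (Fin 2) F)]
  have e00 : (y : Matrix (Fin 2) (Fin 2) F) 0 0 = y 0 0 := rfl
  ext i j
  fin_cases i <;> fin_cases j
  · simp; field_simp; ring
  · simp; field_simp; linear_combination -hdet
  · simp
  · simp; field_simp; ring

lemma elem_decomp (y : SpecialLinearGroup (Fin 2) F) :
    ∃ A B C D : F, y = e21 A * e12 B * e21 C * e12 D := by
  by_cases hc : y 1 0 ≠ 0
  · obtain ⟨B, C, D, h⟩ := elem_decomp_aux y hc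
    exact ⟨0, B, C, D, by rw [e21_zero, one_mul, h]⟩
  · push_neg at hc
    have ha : y 0 0 ≠ 0 := by
      intro h0
      have := det_rel y
      rw [h0, hc] at this
      simp at this
    have h10 : (e21 (1 : F) * y) 1 0 = y 0 0 := by
      show ((e21 (1:F) * y) : Matrix (Fin 2) (Fin 2) F) 1 0 = _
      rw [coe_e21, Matrix.eta_fin_two (y : Matrix (Fin 2) (Fin 2) F), Matrix.mul_fin_two]
      show 1 * y 0 0 + 1 * y 1 0 = y 0 0
      rw [hc]; ring
    obtain ⟨B, C, D, h⟩ := elem_decomp_aux (e21 (1 : F) * y) (by rw [h10]; exact ha)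
    refine ⟨-1, B, C, D, ?_⟩
    have : e21 (-1 : F) * (e21 (1 : F) * y) = y := by
      rw [← mul_assoc, e21_mul, neg_add_cancel, e21_zero, one_mul]
    rw [← this, h, mul_assoc, mul_assoc, mul_assoc]



lemma caseA_identity (m α β γ : R) (hm2 : m * m = 0) (x : SpecialLinearGroup (Fin 2) R)
    (h00 : x 0 0 = 1 + m * γ) (h01 : x 0 1 = m * (α - γ))
    (h10 : x 1 0 = m * (β + γ)) (h11 : x 1 1 = 1 - m * γ) :
    x = e12 (m * α) * e21 (m * β) * (e12 1 * e21 (m * γ) * (e12 1)⁻¹) := by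
  apply Subtype.ext
  rw [e12_inv]
  rw [Matrix.SpecialLinearGroup.coe_mul, Matrix.SpecialLinearGroup.coe_mul,
    Matrix.SpecialLinearGroup.coe_mul, Matrix.SpecialLinearGroup.coe_mul,
    coe_e12, coe_e21, coe_e12, coe_e21, coe_e12,
    Matrix.mul_fin_two, Matrix.mul_fin_two, Matrix.mul_fin_two, Matrix.mul_fin_two]
  rw [Matrix.eta_fin_two (x : Matrix (Fin 2) (Fin 2) R)]
  ext i j
  fin_cases i <;> fin_cases j
  · show x 0 0 = _
    rw [h00]; simp; linear_combination (-(α*β) - α*γ - m*α*β*γ) * hm2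
  · show x 0 1 = _
    rw [h01]; simp; linear_combination (α*γ + m*α*β*γ) * hm2
  · show x 1 0 = _
    rw [h10]; simp; linear_combination (-(β*γ)) * hm2
  · show x 1 1 = _
    rw [h11]; simp; linear_combination (β*γ) * hm2

local notation "SL2Z" => SpecialLinearGroup (Fin 2) ℤ

lemma e12_int_mul_mem (L z : ℤ) :
    e12 (L * z) ∈ Subgroup.normalClosure {e12 L} := by
  induction z using Int.induction_on with
  | zero => rw [mul_zero, e12_zero]; exact one_mem _
  | succ n ih =>
      have : e12 (L * ((n : ℤ) + 1)) = e12 (L * n) * e12 L := by rw [e12_mul]; ring_nf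
      rw [this]
      exact mul_mem ih (Subgroup.subset_normalClosure rfl)
  | pred n ih =>
      have : e12 (L * (-(n : ℤ) - 1)) = e12 (L * (-n)) * (e12 L)⁻¹ := by
        rw [e12_inv, e12_mul]; ring_nf
      rw [this]
      exact mul_mem ih (inv_mem (Subgroup.subset_normalClosure rfl))

lemma e21_int_mul_mem (L z : ℤ) :
    e21 (L * z) ∈ Subgroup.normalClosure {e12 L} := by
  have h1 : e21 (L * z) = wS * e12 (L * (-z)) * wS⁻¹ := by
    rw [e21_eq_conj]; ring_nf
  rw [h1]
  exact Subgroup.Normal.conj_mem (Subgroup.normalClosure_normal) _ (e12_int_mul_mem L (-z)) wS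

lemma red_one_entries {n : ℕ} {g : SL2Z} (h : red n g = 1) :
    ((g 0 0 : ℤ) : ZMod n) = 1 ∧ ((g 0 1 : ℤ) : ZMod n) = 0 ∧
    ((g 1 0 : ℤ) : ZMod n) = 0 ∧ ((g 1 1 : ℤ) : ZMod n) = 1 := by
  have h00 := congrArg (fun u : SpecialLinearGroup (Fin 2) (ZMod n) => (u : Matrix (Fin 2) (Fin 2) (ZMod n)) 0 0) h
  have h01 := congrArg (fun u : SpecialLinearGroup (Fin 2) (ZMod n) => (u : Matrix (Fin 2) (Fin 2) (ZMod n)) 0 1) h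
  have h10 := congrArg (fun u : SpecialLinearGroup (Fin 2) (ZMod n) => (u : Matrix (Fin 2) (Fin 2) (ZMod n)) 1 0) h
  have h11 := congrArg (fun u : SpecialLinearGroup (Fin 2) (ZMod n) => (u : Matrix (Fin 2) (Fin 2) (ZMod n)) 1 1) h
  simp only [Matrix.SpecialLinearGroup.coe_one, Matrix.one_apply] at h00 h01 h10 h11
  refine ⟨?_, ?_, ?_, ?_⟩
  · exact h00
  · exact h01
  · exact h10
  · exact h11

lemma crt_red {n L p : ℕ} (hn : n = L * p) (hcop : Nat.Coprime L p) (x y : SL2Z)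
    (h1 : red L x = red L y) (h2 : red p x = red p y) : red n x = red n y := by
  apply Subtype.ext
  ext i j
  show ((x i j : ℤ) : ZMod n) = ((y i j : ℤ) : ZMod n)
  rw [← sub_eq_zero, ← Int.cast_sub, ZMod.intCast_zmod_eq_zero_iff_dvd, hn]
  have hL : (L : ℤ) ∣ (x i j - y i j) := by
    rw [← ZMod.intCast_zmod_eq_zero_iff_dvd, Int.cast_sub, sub_eq_zero]
    exact congrArg (fun u : SpecialLinearGroup (Fin 2) (ZMod L) => (u : Matrix (Fin 2) (Fin 2) (ZMod L)) i j) h1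
  have hp : (p : ℤ) ∣ (x i j - y i j) := by
    rw [← ZMod.intCast_zmod_eq_zero_iff_dvd, Int.cast_sub, sub_eq_zero]
    exact congrArg (fun u : SpecialLinearGroup (Fin 2) (ZMod p) => (u : Matrix (Fin 2) (Fin 2) (ZMod p)) i j) h2
  have : IsCoprime (L : ℤ) (p : ℤ) := by
    rw [Int.isCoprime_iff_gcd_eq_one]
    simpa [Int.gcd] using hcop
  push_cast
  exact this.mul_dvd hL hp

lemma core_lift {n L p : ℕ} (hp : p.Prime) (hn : n = L * p) (hL : 0 < L) (g : SL2Z)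
    (hg : red L g = 1) :
    ∃ h : SL2Z, h ∈ Subgroup.normalClosure {e12 (L : ℤ)} ∧ red n h = red n g := by
  haveI : NeZero L := ⟨hL.ne'⟩
  haveI : NeZero p := ⟨hp.pos.ne'⟩
  haveI : NeZero n := ⟨by rw [hn]; exact (Nat.mul_pos hL hp.pos).ne'⟩
  obtain ⟨h00, h01, h10, h11⟩ := red_one_entries hg
  obtain ⟨ta, hta⟩ : (L : ℤ) ∣ (g 0 0 - 1) := by
    rw [← ZMod.intCast_zmod_eq_zero_iff_dvd]; push_cast; rw [h00]; ring
  obtain ⟨tb, htb⟩ : (L : ℤ) ∣ g 0 1 := by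
    rw [← ZMod.intCast_zmod_eq_zero_iff_dvd]; exact h01
  obtain ⟨tc, htc⟩ : (L : ℤ) ∣ g 1 0 := by
    rw [← ZMod.intCast_zmod_eq_zero_iff_dvd]; exact h10
  obtain ⟨td, htd⟩ : (L : ℤ) ∣ (g 1 1 - 1) := by
    rw [← ZMod.intCast_zmod_eq_zero_iff_dvd]; push_cast; rw [h11]; ring
  have e00 : g 0 0 = 1 + (L : ℤ) * ta := by linear_combination hta
  have e01 : g 0 1 = (L : ℤ) * tb := htb
  have e10 : g 1 0 = (L : ℤ) * tc := htc
  have e11 : g 1 1 = 1 + (L : ℤ) * td := by linear_combination htd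
  have hdet := det_rel g
  rw [e00, e01, e10, e11] at hdet
  by_cases hpL : p ∣ L
  · -- case A : p ∣ L
    refine ⟨e12 ((L:ℤ) * (tb + ta)) * e21 ((L:ℤ) * (tc - ta)) *
      (e12 1 * e21 ((L:ℤ) * ta) * (e12 1)⁻¹), ?_, ?_⟩
    · exact mul_mem (mul_mem (e12_int_mul_mem _ _) (e21_int_mul_mem _ _))
        (Subgroup.Normal.conj_mem Subgroup.normalClosure_normal _ (e21_int_mul_mem _ _) (e12 1))
    · set m : ZMod n := ((L : ℕ) : ZMod n) with hm
      have hm2 : m * m = 0 := by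
        have hdvd : n ∣ L * L := by rw [hn]; exact Nat.mul_dvd_mul_left L hpL
        rw [hm, ← Nat.cast_mul]
        exact (ZMod.natCast_eq_zero_iff (L*L) n).2 hdvd
      set α : ZMod n := ((tb + ta : ℤ) : ZMod n) with hα
      set β : ZMod n := ((tc - ta : ℤ) : ZMod n) with hβ
      set γ : ZMod n := ((ta : ℤ) : ZMod n) with hγ
      have c1 : ((Int.castRingHom (ZMod n)) ((L:ℤ) * (tb + ta))) = m * α := by
        rw [hα, hm]; simp only [Int.coe_castRingHom]; push_cast; ring
      have c2 : ((Int.castRingHom (ZMod n)) ((L:ℤ) * (tc - ta))) = m * β := by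
        rw [hβ, hm]; simp only [Int.coe_castRingHom]; push_cast; ring
      have c3 : ((Int.castRingHom (ZMod n)) ((L:ℤ) * ta)) = m * γ := by
        rw [hγ, hm]; simp only [Int.coe_castRingHom]; push_cast; ring
      have c4 : ((Int.castRingHom (ZMod n)) (1:ℤ)) = (1 : ZMod n) := map_one _
      show red n _ = red n g
      rw [_root_.map_mul, _root_.map_mul, _root_.map_mul, _root_.map_mul, map_inv]
      rw [show red n = Matrix.SpecialLinearGroup.map (Int.castRingHom (ZMod n)) from rfl]
      rw [map_e12, map_e21, map_e12, map_e21, c1, c2, c3, c4]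
      have hdetz : (1 + m * ((ta:ℤ):ZMod n)) * (1 + m * ((td:ℤ):ZMod n))
          - (m * ((tb:ℤ):ZMod n)) * (m * ((tc:ℤ):ZMod n)) = 1 := by
        have := congrArg (fun z : ℤ => ((z : ZMod n))) hdet
        push_cast at this
        rw [hm]; push_cast
        linear_combination this
      refine (caseA_identity m α β γ hm2 (red n g) ?_ ?_ ?_ ?_).symm
      · show ((g 0 0 : ℤ) : ZMod n) = _
        rw [e00, hγ, hm]; push_cast; ring
      · show ((g 0 1 : ℤ) : ZMod n) = _
        rw [e01, hα, hγ, hm]; push_cast; ring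
      · show ((g 1 0 : ℤ) : ZMod n) = _
        rw [e10, hβ, hγ, hm]; push_cast; ring
      · show ((g 1 1 : ℤ) : ZMod n) = _
        rw [e11, hγ, hm]; push_cast
        linear_combination hdetz + (((tb:ℤ):ZMod n) * ((tc:ℤ):ZMod n)
          - ((ta:ℤ):ZMod n) * ((td:ℤ):ZMod n)) * hm2
  · -- case B : ¬ p ∣ L
    have hcop : Nat.Coprime L p := Nat.coprime_comm.1 (hp.coprime_iff_not_dvd.2 hpL)
    haveI : Fact p.Prime := ⟨hp⟩
    obtain ⟨A, B, C, D, hABCD⟩ := elem_decomp (red p g)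
    have hLp : ((L:ℕ) : ZMod p) ≠ 0 := by
      rw [Ne, ZMod.natCast_eq_zero_iff]; exact hpL
    set Mi : ZMod p := ((L : ZMod p))⁻¹ with hMidef
    have hMi : ((L:ℕ) : ZMod p) * Mi = 1 := mul_inv_cancel₀ hLp
    set lA : ℤ := ((Mi * A).val : ℤ) with hlA
    set lB : ℤ := ((Mi * B).val : ℤ) with hlB
    set lC : ℤ := ((Mi * C).val : ℤ) with hlC
    set lD : ℤ := ((Mi * D).val : ℤ) with hlD
    refine ⟨e21 ((L:ℤ) * lA) * e12 ((L:ℤ) * lB) * e21 ((L:ℤ) * lC) * e12 ((L:ℤ) * lD), ?_, ?_⟩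
    · exact mul_mem (mul_mem (mul_mem (e21_int_mul_mem _ _) (e12_int_mul_mem _ _))
        (e21_int_mul_mem _ _)) (e12_int_mul_mem _ _)
    · apply crt_red hn hcop
      · have hz : ∀ z : ℤ, ((Int.castRingHom (ZMod L)) ((L:ℤ) * z)) = 0 := by
          intro z; simp only [Int.coe_castRingHom]; push_cast [ZMod.natCast_self]; ring
        rw [hg, _root_.map_mul, _root_.map_mul, _root_.map_mul]
        rw [show red L = Matrix.SpecialLinearGroup.map (Int.castRingHom (ZMod L)) from rfl]
        rw [map_e12, map_e21, map_e12, map_e21, hz, hz, hz, hz, e12_zero, e21_zero]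
        simp
      · have hval : ∀ x : ZMod p, ((((x.val : ℤ)) : ZMod p)) = x := by
          intro x; push_cast; exact ZMod.natCast_rightInverse x
        have hz : ∀ x : ZMod p, ((Int.castRingHom (ZMod p)) ((L:ℤ) * ((x.val : ℤ)))) = ((L:ℕ) : ZMod p) * x := by
          intro x
          have : ((Int.castRingHom (ZMod p)) ((L:ℤ) * ((x.val : ℤ)))) = ((L:ℕ) : ZMod p) * (((x.val : ℤ)) : ZMod p) := by
            simp only [Int.coe_castRingHom]; push_cast; ring
          rw [this, hval]
        rw [_root_.map_mul, _root_.map_mul, _root_.map_mul]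
        rw [show red p = Matrix.SpecialLinearGroup.map (Int.castRingHom (ZMod p)) from rfl]
        rw [map_e12, map_e21, map_e12, map_e21, hlA, hlB, hlC, hlD, hz, hz, hz, hz]
        have harg : ∀ x : ZMod p, ((L:ℕ) : ZMod p) * (Mi * x) = x := by
          intro x; rw [← mul_assoc, hMi, one_mul]
        rw [harg, harg, harg, harg]
        exact hABCD.symm


def Wgrp (n m : ℕ) : Subgroup (SpecialLinearGroup (Fin 2) ℤ) :=
  Subgroup.normalClosure ({g | red n g = 1} ∪ {e12 (m : ℤ)})

instance Wgrp_normal (n m : ℕ) : (Wgrp n m).Normal := Subgroup.normalClosure_normal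

lemma mem_Wgrp_of_red_eq_one {n m : ℕ} {g : SpecialLinearGroup (Fin 2) ℤ}
    (h : red n g = 1) : g ∈ Wgrp n m :=
  Subgroup.subset_normalClosure (Or.inl h)

lemma e12m_mem_Wgrp {n m : ℕ} : e12 (m : ℤ) ∈ Wgrp n m :=
  Subgroup.subset_normalClosure (Or.inr rfl)

lemma NC_le_Wgrp {n m : ℕ} (k : ℕ) : Subgroup.normalClosure {e12 ((m * k : ℕ) : ℤ)} ≤ Wgrp n m := by
  apply Subgroup.normalClosure_le_normal
  intro x hx
  rw [Set.mem_singleton_iff] at hx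
  subst hx
  have : ((m * k : ℕ) : ℤ) = (m : ℤ) * (k : ℤ) := by push_cast; ring
  rw [this]
  have h := e12_int_mul_mem (m : ℤ) (k : ℤ)
  exact (Subgroup.normalClosure_le_normal (by
    intro y hy; rw [Set.mem_singleton_iff] at hy; subst hy; exact e12m_mem_Wgrp)) h

lemma gen_lemma : ∀ k n m : ℕ, 0 < n → n = m * k →
    ∀ g : SpecialLinearGroup (Fin 2) ℤ, red m g = 1 → g ∈ Wgrp n m := by
  intro k
  induction k using Nat.strong_induction_on with
  | _ k ih =>
    intro n m hn hk g hg
    have hm : 0 < m := by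
      rcases Nat.eq_zero_or_pos m with h0 | h0
      · exfalso; rw [h0, zero_mul] at hk; exact hn.ne' hk
      · exact h0
    have hk0 : k ≠ 0 := by
      intro h0; rw [h0, mul_zero] at hk; exact hn.ne' hk
    rcases eq_or_ne k 1 with h1 | h1
    · subst h1
      rw [mul_one] at hk
      subst hk
      exact mem_Wgrp_of_red_eq_one hg
    · obtain ⟨p, hp, hpk⟩ := Nat.exists_prime_and_dvd h1
      set L : ℕ := m * (k / p) with hLdef
      have hkp : k / p * p = k := Nat.div_mul_cancel hpk
      have hnL : n = L * p := by rw [hk, hLdef, mul_assoc, hkp]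
      have hLpos : 0 < L := by
        rw [hLdef]
        exact Nat.mul_pos hm (Nat.div_pos (Nat.le_of_dvd (Nat.pos_of_ne_zero hk0) hpk) hp.pos)
      have hglt : g ∈ Wgrp L m :=
        ih (k / p) (Nat.div_lt_self (Nat.pos_of_ne_zero hk0) hp.one_lt) L m hLpos rfl g hg
      refine (Subgroup.normalClosure_le_normal ?_) hglt
      intro x hx
      rcases hx with hx | hx
      · -- red L x = 1
        obtain ⟨h', hmem, hred⟩ := core_lift hp hnL hLpos x hx
        have hx1 : x * h'⁻¹ ∈ Wgrp n m := by
          apply mem_Wgrp_of_red_eq_one (n := n)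
          rw [_root_.map_mul, map_inv, hred, mul_inv_cancel]
        have hx2 : h' ∈ Wgrp n m := by
          have : ((L : ℕ) : ℤ) = ((m * (k / p) : ℕ) : ℤ) := by rw [hLdef]
          rw [this] at hmem
          exact NC_le_Wgrp (k / p) hmem
        have : x = (x * h'⁻¹) * h' := by group
        rw [this]
        exact mul_mem hx1 hx2
      · rw [Set.mem_singleton_iff] at hx
        subst hx
        exact e12m_mem_Wgrp


section Twist

variable {n : ℕ}

def twist (u : (ZMod n)ˣ) (x : SpecialLinearGroup (Fin 2) (ZMod n)) :
    SpecialLinearGroup (Fin 2) (ZMod n) :=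
  ⟨!![x 0 0, (u : ZMod n) * x 0 1; ((u⁻¹ : (ZMod n)ˣ) : ZMod n) * x 1 0, x 1 1], by
    rw [Matrix.det_fin_two_of]
    have hd := det_rel x
    have hu : (u : ZMod n) * ((u⁻¹ : (ZMod n)ˣ) : ZMod n) = 1 := by
      rw [← Units.val_mul, mul_inv_cancel, Units.val_one]
    linear_combination hd - x 0 1 * x 1 0 * hu⟩

lemma twist_00 (u : (ZMod n)ˣ) (x : SpecialLinearGroup (Fin 2) (ZMod n)) :
    (twist u x) 0 0 = x 0 0 := rfl
lemma twist_01 (u : (ZMod n)ˣ) (x : SpecialLinearGroup (Fin 2) (ZMod n)) :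
    (twist u x) 0 1 = (u : ZMod n) * x 0 1 := rfl
lemma twist_10 (u : (ZMod n)ˣ) (x : SpecialLinearGroup (Fin 2) (ZMod n)) :
    (twist u x) 1 0 = ((u⁻¹ : (ZMod n)ˣ) : ZMod n) * x 1 0 := rfl
lemma twist_11 (u : (ZMod n)ˣ) (x : SpecialLinearGroup (Fin 2) (ZMod n)) :
    (twist u x) 1 1 = x 1 1 := rfl

lemma uu' (u : (ZMod n)ˣ) : (u : ZMod n) * ((u⁻¹ : (ZMod n)ˣ) : ZMod n) = 1 := by
  rw [← Units.val_mul, mul_inv_cancel, Units.val_one]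

lemma u'u (u : (ZMod n)ˣ) : ((u⁻¹ : (ZMod n)ˣ) : ZMod n) * (u : ZMod n) = 1 := by
  rw [← Units.val_mul, inv_mul_cancel, Units.val_one]

lemma red_eq_twist_iff (u : (ZMod n)ˣ) (γ₁ γ₂ : SpecialLinearGroup (Fin 2) ℤ) :
    GammaIsoCond n (u : ZMod n) (γ₁, γ₂) ↔ red n γ₁ = twist u (red n γ₂) := by
  constructor
  · rintro ⟨h1, h2, h3, h4⟩
    apply SL2_ext'
    · rw [twist_00]; exact h1
    · rw [twist_01]; exact h2
    · rw [twist_10]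
      show ((γ₁ 1 0 : ℤ) : ZMod n) = ((u⁻¹ : (ZMod n)ˣ) : ZMod n) * ((γ₂ 1 0 : ℤ) : ZMod n)
      rw [← h3, ← mul_assoc, u'u, one_mul]
    · rw [twist_11]; exact h4
  · intro h
    have hent : ∀ i j, (red n γ₁) i j = (twist u (red n γ₂)) i j := fun i j => by rw [h]
    refine ⟨hent 0 0, hent 0 1, ?_, hent 1 1⟩
    have := hent 1 0
    rw [twist_10] at this
    show (u : ZMod n) * ((γ₁ 1 0 : ℤ) : ZMod n) = ((γ₂ 1 0 : ℤ) : ZMod n)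
    rw [show ((γ₁ 1 0 : ℤ) : ZMod n) = (red n γ₁) 1 0 from rfl, this, ← mul_assoc, uu', one_mul]
    rfl

lemma twist_inv (u : (ZMod n)ˣ) (x : SpecialLinearGroup (Fin 2) (ZMod n)) :
    twist u x⁻¹ = (twist u x)⁻¹ := by
  rw [Matrix.SpecialLinearGroup.SL2_inv_expl (twist u x), Matrix.SpecialLinearGroup.SL2_inv_expl x]
  apply SL2_ext' <;> simp [twist] <;> ring

lemma twist_twist_inv (u : (ZMod n)ˣ) (x : SpecialLinearGroup (Fin 2) (ZMod n)) :
    twist u (twist u⁻¹ x) = x := by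
  apply SL2_ext'
  · rw [twist_00, twist_00]
  · rw [twist_01, twist_01, ← mul_assoc, uu', one_mul]
  · rw [twist_10, twist_10, ← mul_assoc, inv_inv, u'u, one_mul]
  · rw [twist_11, twist_11]

lemma map_twist {m : ℕ} (h : m ∣ n) (u : (ZMod n)ˣ) (x : SpecialLinearGroup (Fin 2) (ZMod n)) :
    Matrix.SpecialLinearGroup.map (ZMod.castHom h (ZMod m)) (twist u x) =
      twist (Units.map (ZMod.castHom h (ZMod m)).toMonoidHom u)
        (Matrix.SpecialLinearGroup.map (ZMod.castHom h (ZMod m)) x) := by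
  have hmap : ∀ (y : SpecialLinearGroup (Fin 2) (ZMod n)) (i j : Fin 2),
      (Matrix.SpecialLinearGroup.map (ZMod.castHom h (ZMod m)) y) i j
        = (ZMod.castHom h (ZMod m)) (y i j) := fun y i j => rfl
  apply SL2_ext'
  · rw [hmap, twist_00, twist_00, hmap]
  · rw [hmap, twist_01, twist_01, _root_.map_mul, hmap]
    rfl
  · rw [hmap, twist_10, twist_10, _root_.map_mul, hmap]
    rw [← map_inv (Units.map (ZMod.castHom h (ZMod m)).toMonoidHom) u]
    rfl
  · rw [hmap, twist_11, twist_11, hmap]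

lemma red_comp {m : ℕ} (h : m ∣ n) (g : SpecialLinearGroup (Fin 2) ℤ) :
    Matrix.SpecialLinearGroup.map (ZMod.castHom h (ZMod m)) (red n g) = red m g := by
  apply SL2_ext' <;> exact map_intCast (ZMod.castHom h (ZMod m)) _

end Twist


end AuxDescend

namespace AuxDescend

local notation "SL2Z" => Matrix.SpecialLinearGroup (Fin 2) ℤ


noncomputable def D (g : SL2Z) (z : UpperHalfPlane) : ℂ :=
  (((g 1 0 : ℤ) : ℂ) * z + ((g 1 1 : ℤ) : ℂ))

lemma D_eq_denom (g : SL2Z) (z : UpperHalfPlane) : D g z = UpperHalfPlane.denom g z := by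
  rw [ModularGroup.denom_apply]; rfl

lemma D_ne_zero (g : SL2Z) (z : UpperHalfPlane) : D g z ≠ 0 := by
  rw [D_eq_denom]; exact UpperHalfPlane.denom_ne_zero _ _

lemma coe_mul' (g h : SL2Z) :
    (ModularGroup.coe (g * h)) = ModularGroup.coe g * ModularGroup.coe h := by
  simp [ModularGroup.coe, map_mul]

lemma D_cocycle (g h : SL2Z) (z : UpperHalfPlane) :
    D (g * h) z = D g (h • z) * D h z := by
  have hh := D_ne_zero h z
  simp only [D] at hh ⊢
  rw [UpperHalfPlane.coe_specialLinearGroup_apply]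
  simp only [Matrix.SpecialLinearGroup.coe_mul, Matrix.mul_apply, Fin.sum_univ_two,
    algebraMap_int_eq, eq_intCast, Complex.ofReal_intCast]
  push_cast
  field_simp
  ring

lemma D_one (z : UpperHalfPlane) : D 1 z = 1 := by
  simp [D, Matrix.SpecialLinearGroup.coe_one]

lemma SIP_one (k₁ k₂ : ℤ) (f : UpperHalfPlane → UpperHalfPlane → ℂ) :
    SlashInvariantPair k₁ k₂ f 1 := by
  intro z₁ z₂
  have h1 : ∀ z : UpperHalfPlane, (1 : SL2Z) • z = z := fun z => one_smul _ z
  show f ((1:SL2Z×SL2Z).1 • z₁) ((1:SL2Z×SL2Z).2 • z₂) = _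
  have e1 : ((1:SL2Z×SL2Z).1) = (1 : SL2Z) := rfl
  have e2 : ((1:SL2Z×SL2Z).2) = (1 : SL2Z) := rfl
  rw [e1, e2, h1, h1]
  have : ∀ z : UpperHalfPlane, (((1:SL2Z) 1 0 : ℤ) : ℂ) * z + (((1:SL2Z) 1 1 : ℤ) : ℂ) = 1 := by
    intro z; simpa [D] using D_one z
  rw [this, this, one_zpow, one_zpow, one_mul, one_mul]

lemma SIP_mul {k₁ k₂ : ℤ} {f : UpperHalfPlane → UpperHalfPlane → ℂ} {γ δ : SL2Z × SL2Z}
    (hγ : SlashInvariantPair k₁ k₂ f γ) (hδ : SlashInvariantPair k₁ k₂ f δ) :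
    SlashInvariantPair k₁ k₂ f (γ * δ) := by
  intro z₁ z₂
  show f ((γ.1 * δ.1) • z₁) ((γ.2 * δ.2) • z₂) = D (γ.1*δ.1) z₁ ^ k₁ * D (γ.2*δ.2) z₂ ^ k₂ * f z₁ z₂
  rw [mul_smul, mul_smul, hγ (δ.1 • z₁) (δ.2 • z₂)]
  show D γ.1 (δ.1 • z₁) ^ k₁ * D γ.2 (δ.2 • z₂) ^ k₂ * f (δ.1 • z₁) (δ.2 • z₂) = _
  rw [hδ z₁ z₂]
  show D γ.1 (δ.1 • z₁) ^ k₁ * D γ.2 (δ.2 • z₂) ^ k₂ * (D δ.1 z₁ ^ k₁ * D δ.2 z₂ ^ k₂ * f z₁ z₂) = _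
  rw [D_cocycle, D_cocycle, mul_zpow, mul_zpow]
  ring

lemma cancel_aux (k₁ k₂ : ℤ) {A B C E F G : ℂ} (h : G = A ^ k₁ * B ^ k₂ * F)
    (h1 : A * C = 1) (h2 : B * E = 1) : F = C ^ k₁ * E ^ k₂ * G := by
  have hA : A ^ k₁ * C ^ k₁ = 1 := by rw [← mul_zpow, h1, one_zpow]
  have hB : B ^ k₂ * E ^ k₂ = 1 := by rw [← mul_zpow, h2, one_zpow]
  calc F = 1 * (1 * F) := by ring
  _ = (A ^ k₁ * C ^ k₁) * ((B ^ k₂ * E ^ k₂) * F) := by rw [hA, hB]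
  _ = C ^ k₁ * E ^ k₂ * (A ^ k₁ * B ^ k₂ * F) := by ring
  _ = C ^ k₁ * E ^ k₂ * G := by rw [← h]

lemma SIP_inv {k₁ k₂ : ℤ} {f : UpperHalfPlane → UpperHalfPlane → ℂ} {γ : SL2Z × SL2Z}
    (hγ : SlashInvariantPair k₁ k₂ f γ) :
    SlashInvariantPair k₁ k₂ f γ⁻¹ := by
  intro z₁ z₂
  have h := hγ (γ⁻¹.1 • z₁) (γ⁻¹.2 • z₂)
  have e1 : γ.1 • γ⁻¹.1 • z₁ = z₁ := by
    rw [← mul_smul]; show (γ.1 * (γ.1)⁻¹) • z₁ = z₁; rw [mul_inv_cancel, one_smul]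
  have e2 : γ.2 • γ⁻¹.2 • z₂ = z₂ := by
    rw [← mul_smul]; show (γ.2 * (γ.2)⁻¹) • z₂ = z₂; rw [mul_inv_cancel, one_smul]
  rw [e1, e2] at h
  have c1 : D γ.1 (γ⁻¹.1 • z₁) * D γ⁻¹.1 z₁ = 1 := by
    rw [← D_cocycle]
    show D (γ.1 * (γ.1)⁻¹) z₁ = 1
    rw [mul_inv_cancel]; exact D_one z₁
  have c2 : D γ.2 (γ⁻¹.2 • z₂) * D γ⁻¹.2 z₂ = 1 := by
    rw [← D_cocycle]
    show D (γ.2 * (γ.2)⁻¹) z₂ = 1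
    rw [mul_inv_cancel]; exact D_one z₂
  exact cancel_aux k₁ k₂ h c1 c2



end AuxDescend

local notation "SL2Z" => Matrix.SpecialLinearGroup (Fin 2) ℤ

theorem invariance_descends_level (N d : ℕ) (hN : 0 < N) (hd : d ∣ N) (hd0 : 0 < d)
    (ε : (ZMod N)ˣ) (k₁ k₂ : ℤ) (f : UpperHalfPlane → UpperHalfPlane → ℂ)
    (hol₁ : ∀ z₂, MDifferentiable 𝓘(ℂ) 𝓘(ℂ) (fun z₁ => f z₁ z₂))
    (hol₂ : ∀ z₁, MDifferentiable 𝓘(ℂ) 𝓘(ℂ) (fun z₂ => f z₁ z₂))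
    (hinv : ∀ γ, GammaIsoCond N (ε : ZMod N) γ → SlashInvariantPair k₁ k₂ f γ)
    (T : Matrix.SpecialLinearGroup (Fin 2) ℤ × Matrix.SpecialLinearGroup (Fin 2) ℤ)
    (hT₁ : (T.1 : Matrix (Fin 2) (Fin 2) ℤ) = !![1, ((N / d : ℕ) : ℤ); 0, 1])
    (hT₂ : (T.2 : Matrix (Fin 2) (Fin 2) ℤ) = 1)
    (hTf : SlashInvariantPair k₁ k₂ f T) :
    ∀ γ, GammaIsoCond (N / d)
        (ZMod.castHom (Nat.div_dvd_of_dvd hd) (ZMod (N / d)) (ε : ZMod N)) γ →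
      SlashInvariantPair k₁ k₂ f γ := by
  intro γ hγ
  classical
  have hMdvd : (N / d) ∣ N := Nat.div_dvd_of_dvd hd
  have hM0 : 0 < N / d := Nat.div_pos (Nat.le_of_dvd hN hd) hd0
  set H : Subgroup (SL2Z × SL2Z) :=
    Subgroup.closure ({γ' | GammaIsoCond N (ε : ZMod N) γ'} ∪ {T}) with hH
  have hT1 : T.1 = AuxDescend.e12 ((N / d : ℕ) : ℤ) := Subtype.ext (by rw [hT₁]; rfl)
  have hT2 : T.2 = 1 := Subtype.ext (by rw [hT₂]; rfl)
  have hconjpair : ∀ v : SL2Z, ∃ w : SL2Z, GammaIsoCond N (ε : ZMod N) (v, w) := by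
    intro v
    obtain ⟨w, hw⟩ := AuxDescend.red_surjective N hN (AuxDescend.twist ε⁻¹ (AuxDescend.red N v))
    exact ⟨w, (AuxDescend.red_eq_twist_iff ε v w).2
      (by rw [hw, AuxDescend.twist_twist_inv])⟩
  haveI hnormal : (H.comap (MonoidHom.inl SL2Z SL2Z)).Normal := by
    constructor
    intro h hh v
    rw [Subgroup.mem_comap] at hh ⊢
    obtain ⟨w, hw⟩ := hconjpair v
    have hvw : (v, w) ∈ H := Subgroup.subset_closure (Or.inl hw)
    have heq : (MonoidHom.inl SL2Z SL2Z) (v * h * v⁻¹) = (v, w) * ((MonoidHom.inl SL2Z SL2Z) h) * (v, w)⁻¹ := by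
      simp [Prod.ext_iff]
    rw [heq]
    exact mul_mem (mul_mem hvw hh) (inv_mem hvw)
  have hWle : AuxDescend.Wgrp N (N / d) ≤ H.comap (MonoidHom.inl SL2Z SL2Z) := by
    apply Subgroup.normalClosure_le_normal
    rintro x (hx | hx)
    · rw [Set.mem_setOf_eq] at hx
      simp only [SetLike.mem_coe, Subgroup.mem_comap]
      apply Subgroup.subset_closure
      left
      obtain ⟨a1, b1, c1, d1⟩ := AuxDescend.red_one_entries hx
      refine ⟨?_, ?_, ?_, ?_⟩
      · show ((x 0 0 : ℤ) : ZMod N) = (((1:SL2Z) 0 0 : ℤ) : ZMod N)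
        rw [a1]; simp
      · show ((x 0 1 : ℤ) : ZMod N) = (ε : ZMod N) * (((1:SL2Z) 0 1 : ℤ) : ZMod N)
        rw [b1]; simp
      · show (ε : ZMod N) * ((x 1 0 : ℤ) : ZMod N) = (((1:SL2Z) 1 0 : ℤ) : ZMod N)
        rw [c1]; simp
      · show ((x 1 1 : ℤ) : ZMod N) = (((1:SL2Z) 1 1 : ℤ) : ZMod N)
        rw [d1]; simp
    · rw [Set.mem_singleton_iff] at hx
      subst hx
      simp only [SetLike.mem_coe, Subgroup.mem_comap]
      have heqT : (MonoidHom.inl SL2Z SL2Z) (AuxDescend.e12 ((N / d : ℕ) : ℤ)) = T := by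
        apply Prod.ext
        · exact hT1.symm
        · exact hT2.symm
      rw [heqT]
      exact Subgroup.subset_closure (Or.inr rfl)
  obtain ⟨δ1, hδ1⟩ := AuxDescend.red_surjective N hN
    (AuxDescend.twist ε (AuxDescend.red N γ.2⁻¹))
  have hpair : GammaIsoCond N (ε : ZMod N) (δ1, γ.2⁻¹) :=
    (AuxDescend.red_eq_twist_iff ε δ1 γ.2⁻¹).2 hδ1
  set ε'' : (ZMod (N / d))ˣ := Units.map (ZMod.castHom hMdvd (ZMod (N / d))).toMonoidHom ε
    with hε''
  have hcond : GammaIsoCond (N / d) ((ε'' : ZMod (N / d))) γ := hγ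
  have hγ' : AuxDescend.red (N / d) γ.1 = AuxDescend.twist ε'' (AuxDescend.red (N / d) γ.2) :=
    (AuxDescend.red_eq_twist_iff ε'' γ.1 γ.2).1 hcond
  have hg1 : AuxDescend.red (N / d) (γ.1 * δ1) = 1 := by
    have h2 : AuxDescend.red (N / d) δ1
        = AuxDescend.twist ε'' (AuxDescend.red (N / d) γ.2⁻¹) := by
      rw [← AuxDescend.red_comp hMdvd δ1, hδ1, AuxDescend.map_twist hMdvd,
        AuxDescend.red_comp hMdvd]
    rw [_root_.map_mul, hγ', h2, map_inv, AuxDescend.twist_inv, mul_inv_cancel]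
  have hmem1 : (γ.1 * δ1, (1 : SL2Z)) ∈ H := by
    have := AuxDescend.gen_lemma d N (N / d) hN (Nat.div_mul_cancel hd).symm (γ.1 * δ1) hg1
    exact Subgroup.mem_comap.1 (hWle this)
  have hγH : γ ∈ H := by
    have hfact : γ = (γ.1 * δ1, (1 : SL2Z)) * (δ1, γ.2⁻¹)⁻¹ := by
      apply Prod.ext <;> simp
    rw [hfact]
    exact mul_mem hmem1 (inv_mem (Subgroup.subset_closure (Or.inl hpair)))
  refine Subgroup.closure_induction ?_ ?_ ?_ ?_ hγH
  · rintro x (hx | hx)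
    · exact hinv x hx
    · rw [Set.mem_singleton_iff] at hx
      subst hx
      exact hTf
  · exact AuxDescend.SIP_one k₁ k₂ f
  · intro x y _ _ hx hy
    exact AuxDescend.SIP_mul hx hy
  · intro x _ hx
    exact AuxDescend.SIP_inv hx
end
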